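/- Let H = ℓ²(ℕ, ℂ) with standard orthonormal basis (δ_n)_{n∈ℕ}, let e_{ij} ∈ B(H) be the rank-one operator e_{ij}(ξ) = ⟨ξ, δ_j⟩·δ_i, and let E be the norm closure of Span_ℂ{e_{ij} : (i,j) ≠ (0,0)}. Then E does not have the completely positive approximation property (CPAP). -/

import Mathlib

/-!
Statement 4: The operator system `E = closed span of {e_{ij} : (i,j) ≠ (0,0)}`
inside `B(ℓ²(ℕ))` does not have the completely positive approximation property.
-/

open scoped ComplexOrder

noncomputable section

/-- Positivity of a `d × d` matrix of bounded operators, viewed as an operator on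
`H^{⊕ d}`. -/
def MatPosOp {H : Type} [NormedAddCommGroup H] [InnerProductSpace ℂ H] {d : ℕ}
    (X : Matrix (Fin d) (Fin d) (H →L[ℂ] H)) : Prop :=
  ∀ v : Fin d → H, 0 ≤ ∑ i, ∑ j, (inner ℂ (X i j (v j)) (v i) : ℂ)

/-- `‖X‖ ≤ c` for a `d × d` matrix of bounded operators, viewed as an operator on
`H^{⊕ d}` (via the sesquilinear form bound). -/
def MatNormLeOp {H : Type} [NormedAddCommGroup H] [InnerProductSpace ℂ H] {d : ℕ}
    (X : Matrix (Fin d) (Fin d) (H →L[ℂ] H)) (c : ℝ) : Prop :=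
  ∀ v w : Fin d → H, ‖∑ i, ∑ j, (inner ℂ (X i j (v j)) (w i) : ℂ)‖ ≤
    c * Real.sqrt (∑ j, ‖v j‖ ^ 2) * Real.sqrt (∑ i, ‖w i‖ ^ 2)

/-- Positive semidefiniteness of a complex matrix. -/
def MatPosC {ι : Type} [Fintype ι] (M : Matrix ι ι ℂ) : Prop :=
  ∀ v : ι → ℂ, 0 ≤ ∑ i, ∑ j, (starRingEnd ℂ) (v i) * M i j * v j

/-- `‖M‖ ≤ c` for a complex matrix, with respect to the operator norm on `ℓ²(ι)`. -/
def MatNormLeC {ι : Type} [Fintype ι] (M : Matrix ι ι ℂ) (c : ℝ) : Prop :=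
  ∀ v w : ι → ℂ, ‖∑ i, ∑ j, (starRingEnd ℂ) (w i) * M i j * v j‖ ≤
    c * Real.sqrt (∑ j, ‖v j‖ ^ 2) * Real.sqrt (∑ i, ‖w i‖ ^ 2)

variable {H : Type} [NormedAddCommGroup H] [InnerProductSpace ℂ H]

/-- Complete positivity for a map `E → M_n(ℂ)`. -/
def CPTo (E : Submodule ℂ (H →L[ℂ] H)) {n : ℕ}
    (ψ : E →ₗ[ℂ] Matrix (Fin n) (Fin n) ℂ) : Prop :=
  ∀ (d : ℕ) (X : Matrix (Fin d) (Fin d) E),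
    MatPosOp (fun i j => (X i j : H →L[ℂ] H)) →
      MatPosC (fun p q : Fin d × Fin n => ψ (X p.1 q.1) p.2 q.2)

/-- Complete contractivity for a map `E → M_n(ℂ)`. -/
def CCTo (E : Submodule ℂ (H →L[ℂ] H)) {n : ℕ}
    (ψ : E →ₗ[ℂ] Matrix (Fin n) (Fin n) ℂ) : Prop :=
  ∀ (d : ℕ) (X : Matrix (Fin d) (Fin d) E) (c : ℝ),
    MatNormLeOp (fun i j => (X i j : H →L[ℂ] H)) c →
      MatNormLeC (fun p q : Fin d × Fin n => ψ (X p.1 q.1) p.2 q.2) c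

/-- Complete positivity for a map `M_n(ℂ) → E`. -/
def CPFrom (E : Submodule ℂ (H →L[ℂ] H)) {n : ℕ}
    (φ : Matrix (Fin n) (Fin n) ℂ →ₗ[ℂ] E) : Prop :=
  ∀ (d : ℕ) (M : Matrix (Fin d) (Fin d) (Matrix (Fin n) (Fin n) ℂ)),
    MatPosC (fun p q : Fin d × Fin n => M p.1 q.1 p.2 q.2) →
      MatPosOp (fun i j => (φ (M i j) : H →L[ℂ] H))

/-- Complete contractivity for a map `M_n(ℂ) → E`. -/
def CCFrom (E : Submodule ℂ (H →L[ℂ] H)) {n : ℕ}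
    (φ : Matrix (Fin n) (Fin n) ℂ →ₗ[ℂ] E) : Prop :=
  ∀ (d : ℕ) (M : Matrix (Fin d) (Fin d) (Matrix (Fin n) (Fin n) ℂ)) (c : ℝ),
    MatNormLeC (fun p q : Fin d × Fin n => M p.1 q.1 p.2 q.2) c →
      MatNormLeOp (fun i j => (φ (M i j) : H →L[ℂ] H)) c

/-- The completely positive approximation property for an operator system
`E ⊆ B(H)`: the identity of `E` is a point-norm limit of completely positive
completely contractive maps factoring through matrix algebras. -/
def HasCPAP (E : Submodule ℂ (H →L[ℂ] H)) : Prop :=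
  ∀ (F : Finset E) (ε : ℝ), 0 < ε →
    ∃ (n : ℕ), 1 ≤ n ∧
      ∃ (ψ : E →ₗ[ℂ] Matrix (Fin n) (Fin n) ℂ)
        (φ : Matrix (Fin n) (Fin n) ℂ →ₗ[ℂ] E),
        CPTo E ψ ∧ CCTo E ψ ∧ CPFrom E φ ∧ CCFrom E φ ∧
        ∀ x ∈ F, ‖(φ (ψ x) : H →L[ℂ] H) - (x : H →L[ℂ] H)‖ < ε

/-- The Hilbert space `ℓ²(ℕ, ℂ)`. -/
abbrev ellTwo : Type := lp (fun _ : ℕ => ℂ) 2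

/-- The standard orthonormal basis of `ℓ²(ℕ, ℂ)`. -/
def deltaBasis (n : ℕ) : ellTwo := lp.single 2 n 1

/-- The matrix unit `e_{ij} : ξ ↦ ⟨ξ, δ_j⟩ δ_i` on `ℓ²(ℕ, ℂ)`. -/
def matrixUnit (i j : ℕ) : ellTwo →L[ℂ] ellTwo :=
  (ContinuousLinearMap.toSpanSingleton ℂ (deltaBasis i)).comp
    ((innerSL ℂ) (deltaBasis j))

lemma realAux {r c0 : ℝ} (hc : 0 ≤ c0) (h : ∀ s : ℝ, 0 ≤ s * r + s ^ 2 * c0) : r = 0 := by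
  by_contra hr
  have habs : ∀ s : ℝ, 0 < s → |r| ≤ s * c0 := by
    intro s hs
    have h1 := h s
    have h2 := h (-s)
    rw [abs_le]
    constructor <;> nlinarith
  rcases eq_or_lt_of_le hc with hc0 | hc0
  · have := habs 1 one_pos
    rw [← hc0] at this
    simp at this
    exact hr this
  · have := habs (|r| / (2 * c0)) (by positivity)
    have hr' : 0 < |r| := abs_pos.mpr hr
    have heq : c0 * |r| / (2 * c0) = |r| / 2 := by field_simp
    rw [div_mul_eq_mul_div, mul_comm, heq] at this
    linarith

variable {H : Type} [NormedAddCommGroup H] [InnerProductSpace ℂ H]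

lemma keyZero {T : H →L[ℂ] H} (hpos : ∀ u : H, 0 ≤ (inner ℂ (T u) u : ℂ))
    {x y : H} (hx : (inner ℂ (T x) x : ℂ) = 0) : (inner ℂ (T y) x : ℂ) = 0 := by
  set b : ℂ := inner ℂ (T x) y with hb
  set b' : ℂ := inner ℂ (T y) x with hb'
  set c : ℂ := inner ℂ (T y) y with hc
  have hcpos : 0 ≤ c := hpos y
  have hcre : 0 ≤ c.re ∧ c.im = 0 := by
    rw [Complex.le_def] at hcpos; exact ⟨by simpa using hcpos.1, (hcpos.2).symm⟩
  have hq : ∀ t : ℂ, 0 ≤ (starRingEnd ℂ) t * b' + t * b + (starRingEnd ℂ) t * t * c := by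
    intro t
    have := hpos (x + t • y)
    have hexp : (inner ℂ (T (x + t • y)) (x + t • y) : ℂ)
        = (starRingEnd ℂ) t * b' + t * b + (starRingEnd ℂ) t * t * c := by
      simp only [map_add, map_smul, inner_add_left, inner_add_right,
        inner_smul_left, inner_smul_right, hx, hb, hb', hc, ContinuousLinearMap.add_apply,
        ContinuousLinearMap.smul_apply]
      ring
    rwa [hexp] at this
  -- real direction
  have hre1 : ∀ s : ℝ, 0 ≤ s * (b + b').re + s ^ 2 * c.re := by
    intro s
    have := hq (s : ℂ)
    rw [Complex.le_def] at this
    have h1 := this.1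
    simp [Complex.add_re, Complex.mul_re, Complex.ofReal_re, Complex.ofReal_im] at h1 ⊢
    nlinarith [h1]
  have him1 : (b + b').im = 0 := by
    have := hq (1 : ℂ)
    rw [Complex.le_def] at this
    have h2 := this.2
    simp [Complex.add_im, Complex.mul_im] at h2
    simp [Complex.add_im]
    linarith [hcre.2, h2]
  have hre0 : (b + b').re = 0 := realAux hcre.1 hre1
  have hre2 : ∀ s : ℝ, 0 ≤ s * (-(b - b').im) + s ^ 2 * c.re := by
    intro s
    have := hq (Complex.I * (s : ℂ))
    rw [Complex.le_def] at this
    have h1 := this.1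
    simp [Complex.add_re, Complex.mul_re, Complex.mul_im, Complex.sub_re, Complex.sub_im,
      Complex.I_re, Complex.I_im, Complex.ofReal_re, Complex.ofReal_im, Complex.conj_re,
      Complex.conj_im, map_mul, Complex.conj_I] at h1 ⊢
    nlinarith [h1]
  have him2 : (b - b').im = 0 := by
    have := realAux hcre.1 hre2
    simp at this ⊢
    linarith
  have hre3 : (b - b').re = 0 := by
    have := hq (Complex.I * (1 : ℂ))
    rw [Complex.le_def] at this
    have h2 := this.2
    simp [Complex.add_im, Complex.mul_im, Complex.mul_re, Complex.I_re, Complex.I_im,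
      map_mul, Complex.conj_I, Complex.conj_re, Complex.conj_im] at h2
    simp [Complex.sub_re]
    simp [Complex.add_im, Complex.sub_im] at him1 him2
    nlinarith [h2, hcre.2]
  apply Complex.ext
  · simp [Complex.add_re, Complex.sub_re] at hre0 hre3
    simp; linarith
  · simp [Complex.add_im, Complex.sub_im] at him1 him2
    simp; linarith


lemma deltaBasis_inner (i j : ℕ) :
    (inner ℂ (deltaBasis i) (deltaBasis j) : ℂ) = if i = j then 1 else 0 := by
  rw [deltaBasis, deltaBasis, lp.inner_single_left]
  by_cases h : i = j <;> simp [lp.single_apply, h, eq_comm]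

lemma matrixUnit_apply (i j : ℕ) (ξ : ellTwo) :
    matrixUnit i j ξ = (inner ℂ (deltaBasis j) ξ : ℂ) • deltaBasis i := by
  simp [matrixUnit, ContinuousLinearMap.toSpanSingleton_apply]

def omega0 : (ellTwo →L[ℂ] ellTwo) →L[ℂ] ℂ :=
  (innerSL ℂ (deltaBasis 0)).comp ((ContinuousLinearMap.apply ℂ ellTwo) (deltaBasis 0))

lemma omega0_apply (T : ellTwo →L[ℂ] ellTwo) : omega0 T = (inner ℂ (deltaBasis 0) (T (deltaBasis 0)) : ℂ) := rfl

lemma omega0_vanish (T : ellTwo →L[ℂ] ellTwo)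
    (hT : T ∈ (Submodule.span ℂ
      {T : ellTwo →L[ℂ] ellTwo | ∃ i j : ℕ, (i, j) ≠ (0, 0) ∧
        T = matrixUnit i j}).topologicalClosure) :
    (inner ℂ (deltaBasis 0) (T (deltaBasis 0)) : ℂ) = 0 := by
  have hle : (Submodule.span ℂ
      {T : ellTwo →L[ℂ] ellTwo | ∃ i j : ℕ, (i, j) ≠ (0, 0) ∧
        T = matrixUnit i j}).topologicalClosure ≤ LinearMap.ker omega0.toLinearMap := by
    apply Submodule.topologicalClosure_minimal
    · rw [Submodule.span_le]
      rintro S ⟨i, j, hij, rfl⟩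
      simp only [SetLike.mem_coe, LinearMap.mem_ker, ContinuousLinearMap.coe_coe]
      rw [omega0_apply, matrixUnit_apply, inner_smul_right, deltaBasis_inner, deltaBasis_inner]
      by_cases hi : i = 0
      · have hj : ¬ (j = 0) := by intro hj0; exact hij (by simp [hi, hj0])
        simp [hi, hj, eq_comm]
      · simp [Ne.symm hi, eq_comm, hi]
    · exact ContinuousLinearMap.isClosed_ker omega0
  simpa [omega0_apply] using (hle hT)



section Phi
variable (Esub : Submodule ℂ (ellTwo →L[ℂ] ellTwo)) {n : ℕ}
  (φ : Matrix (Fin n) (Fin n) ℂ →ₗ[ℂ] Esub)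

def Lmap : Matrix (Fin n) (Fin n) ℂ →ₗ[ℂ] ℂ :=
  (innerSL ℂ (deltaBasis 0)).toLinearMap ∘ₗ
    ((ContinuousLinearMap.apply ℂ ellTwo (deltaBasis 1)).toLinearMap ∘ₗ (Esub.subtype ∘ₗ φ))

lemma Lmap_apply (M : Matrix (Fin n) (Fin n) ℂ) :
    Lmap Esub φ M = (inner ℂ (deltaBasis 0) ((φ M : ellTwo →L[ℂ] ellTwo) (deltaBasis 1)) : ℂ) := rfl

lemma rankOnePos (v : Fin n → ℂ) :
    MatPosC (fun p q : Fin 1 × Fin n => v p.2 * (starRingEnd ℂ) (v q.2)) := by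
  intro u
  have : ∑ i, ∑ j, (starRingEnd ℂ) (u i) * (v i.2 * (starRingEnd ℂ) (v j.2)) * u j
      = (∑ i : Fin 1 × Fin n, (starRingEnd ℂ) (u i) * v i.2) *
        (∑ j : Fin 1 × Fin n, (starRingEnd ℂ) (v j.2) * u j) := by
    rw [Finset.sum_mul_sum]
    apply Finset.sum_congr rfl; intro i _
    apply Finset.sum_congr rfl; intro j _
    ring
  rw [this]
  have hconj : (∑ j : Fin 1 × Fin n, (starRingEnd ℂ) (v j.2) * u j)
      = (starRingEnd ℂ) (∑ i : Fin 1 × Fin n, (starRingEnd ℂ) (u i) * v i.2) := by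
    rw [map_sum]; apply Finset.sum_congr rfl; intro i _; simp [mul_comm]
  rw [hconj, Complex.mul_conj]
  exact_mod_cast Complex.zero_le_real.mpr (Complex.normSq_nonneg _)


end Phi

abbrev Eclo : Submodule ℂ (ellTwo →L[ℂ] ellTwo) :=
  (Submodule.span ℂ
      {T : ellTwo →L[ℂ] ellTwo | ∃ i j : ℕ, (i, j) ≠ (0, 0) ∧
        T = matrixUnit i j}).topologicalClosure

section PhiC
variable {n : ℕ} (φ : Matrix (Fin n) (Fin n) ℂ →ₗ[ℂ] Eclo)

lemma Lmap_rankOne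
    (hCP : ∀ (d : ℕ) (M : Matrix (Fin d) (Fin d) (Matrix (Fin n) (Fin n) ℂ)),
      MatPosC (fun p q : Fin d × Fin n => M p.1 q.1 p.2 q.2) →
        MatPosOp (fun i j => (φ (M i j) : ellTwo →L[ℂ] ellTwo)))
    (v : Fin n → ℂ) :
    Lmap Eclo φ (fun p q => v p * (starRingEnd ℂ) (v q)) = 0 := by
  set P : Matrix (Fin n) (Fin n) ℂ := fun p q => v p * (starRingEnd ℂ) (v q) with hP
  set T : ellTwo →L[ℂ] ellTwo := (φ P : ellTwo →L[ℂ] ellTwo) with hT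
  have hpos : ∀ u : ellTwo, 0 ≤ (inner ℂ (T u) u : ℂ) := by
    intro u
    have h1 := hCP 1 (fun _ _ => P) (by
      intro w; exact rankOnePos v w)
    have h2 := h1 (fun _ => u)
    simpa [Fin.sum_univ_one] using h2
  have ha : (inner ℂ (T (deltaBasis 0)) (deltaBasis 0) : ℂ) = 0 := by
    have := omega0_vanish T (φ P).2
    rw [← inner_conj_symm, this, map_zero]
  have := keyZero hpos (x := deltaBasis 0) (y := deltaBasis 1) ha
  rw [Lmap_apply, ← inner_conj_symm, ← hT, this, map_zero]

lemma Lmap_rankOne' 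
    (hCP : ∀ (d : ℕ) (M : Matrix (Fin d) (Fin d) (Matrix (Fin n) (Fin n) ℂ)),
      MatPosC (fun p q : Fin d × Fin n => M p.1 q.1 p.2 q.2) →
        MatPosOp (fun i j => (φ (M i j) : ellTwo →L[ℂ] ellTwo)))
    (u w : Fin n → ℂ) :
    Lmap Eclo φ (fun p q => u p * (starRingEnd ℂ) (w q)) = 0 := by
  have hmat : (fun p q => u p * (starRingEnd ℂ) (w q)) =
      (1/4 : ℂ) • (fun p q => (u + w) p * (starRingEnd ℂ) ((u + w) q) : Matrix (Fin n) (Fin n) ℂ)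
      + (Complex.I/4) • (fun p q => (u + Complex.I • w) p * (starRingEnd ℂ) ((u + Complex.I • w) q) : Matrix (Fin n) (Fin n) ℂ)
      + (-(1/4) : ℂ) • (fun p q => (u - w) p * (starRingEnd ℂ) ((u - w) q) : Matrix (Fin n) (Fin n) ℂ)
      + (-(Complex.I/4)) • (fun p q => (u - Complex.I • w) p * (starRingEnd ℂ) ((u - Complex.I • w) q) : Matrix (Fin n) (Fin n) ℂ) := by
    funext p q
    show u p * (starRingEnd ℂ) (w q) = _
    simp only [Matrix.add_apply, Matrix.smul_apply, Pi.add_apply, Pi.sub_apply, Pi.smul_apply,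
      smul_eq_mul, map_add, map_sub, map_mul, Complex.conj_I]
    ring_nf
    simp only [Complex.I_sq]
    ring
  rw [hmat]
  erw [map_add, map_add, map_add, map_smul, map_smul, map_smul, map_smul]
  simp only [smul_eq_mul]
  rw [Lmap_rankOne φ hCP, Lmap_rankOne φ hCP, Lmap_rankOne φ hCP, Lmap_rankOne φ hCP]
  ring

lemma Lmap_eq_zero
    (hCP : ∀ (d : ℕ) (M : Matrix (Fin d) (Fin d) (Matrix (Fin n) (Fin n) ℂ)),
      MatPosC (fun p q : Fin d × Fin n => M p.1 q.1 p.2 q.2) →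
        MatPosOp (fun i j => (φ (M i j) : ellTwo →L[ℂ] ellTwo)))
    (M : Matrix (Fin n) (Fin n) ℂ) :
    Lmap Eclo φ M = 0 := by
  rw [Matrix.matrix_eq_sum_single M]
  rw [map_sum]
  apply Finset.sum_eq_zero; intro i _
  rw [map_sum]
  apply Finset.sum_eq_zero; intro j _
  have hstd : Matrix.single i j (M i j)
      = (M i j) • (fun p q : Fin n =>
          (Pi.single i 1 : Fin n → ℂ) p * (starRingEnd ℂ) ((Pi.single j 1 : Fin n → ℂ) q) : Matrix (Fin n) (Fin n) ℂ) := by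
    funext p q
    simp only [Matrix.single, Matrix.smul_apply, Matrix.of_apply, smul_eq_mul,
      Pi.single_apply]
    by_cases hp : i = p <;> by_cases hq : j = q <;> simp [hp, hq, eq_comm]
  rw [hstd]
  erw [map_smul]
  rw [Lmap_rankOne' φ hCP, smul_zero]

end PhiC


theorem stmt4 :
    ¬ HasCPAP ((Submodule.span ℂ
      {T : ellTwo →L[ℂ] ellTwo | ∃ i j : ℕ, (i, j) ≠ (0, 0) ∧
        T = matrixUnit i j}).topologicalClosure) := by
  intro h
  have hmem : matrixUnit 0 1 ∈ Eclo :=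
    Submodule.le_topologicalClosure _ (Submodule.subset_span ⟨0, 1, by simp, rfl⟩)
  set x0 : Eclo := ⟨matrixUnit 0 1, hmem⟩ with hx0
  obtain ⟨n, hn, ψ, φ, hCPto, hCCto, hCPfrom, hCCfrom, happ⟩ := h {x0} (1/2) (by norm_num)
  have hx := happ x0 (Finset.mem_singleton_self x0)
  have hL : (inner ℂ (deltaBasis 0) ((φ (ψ x0) : ellTwo →L[ℂ] ellTwo) (deltaBasis 1)) : ℂ) = 0 :=
    Lmap_eq_zero φ hCPfrom (ψ x0)
  have he : (inner ℂ (deltaBasis 0) (matrixUnit 0 1 (deltaBasis 1)) : ℂ) = 1 := by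
    rw [matrixUnit_apply, inner_smul_right, deltaBasis_inner, deltaBasis_inner]
    norm_num
  set D : ellTwo →L[ℂ] ellTwo := (φ (ψ x0) : ellTwo →L[ℂ] ellTwo) - matrixUnit 0 1 with hD
  have h1 : (1:ℝ) = ‖(inner ℂ (deltaBasis 0) (D (deltaBasis 1)) : ℂ)‖ := by
    rw [hD, ContinuousLinearMap.sub_apply, inner_sub_right, hL, he]
    norm_num
  have hn1 : ‖deltaBasis 1‖ = 1 := by
    have : (inner ℂ (deltaBasis 1) (deltaBasis 1) : ℂ) = 1 := by
      rw [deltaBasis_inner]; norm_num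
    rw [@norm_eq_sqrt_re_inner ℂ, this]
    simp
  have hn0 : ‖deltaBasis 0‖ = 1 := by
    have : (inner ℂ (deltaBasis 0) (deltaBasis 0) : ℂ) = 1 := by
      rw [deltaBasis_inner]; norm_num
    rw [@norm_eq_sqrt_re_inner ℂ, this]
    simp
  have h2 : ‖(inner ℂ (deltaBasis 0) (D (deltaBasis 1)) : ℂ)‖ ≤ ‖D‖ := by
    calc ‖(inner ℂ (deltaBasis 0) (D (deltaBasis 1)) : ℂ)‖
        ≤ ‖deltaBasis 0‖ * ‖D (deltaBasis 1)‖ := norm_inner_le_norm _ _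
      _ = ‖D (deltaBasis 1)‖ := by rw [hn0, one_mul]
      _ ≤ ‖D‖ * ‖deltaBasis 1‖ := D.le_opNorm _
      _ = ‖D‖ := by rw [hn1, mul_one]
  have hlt : ‖D‖ < 1/2 := by
    have : (x0 : ellTwo →L[ℂ] ellTwo) = matrixUnit 0 1 := rfl
    rw [hD, ← this]
    exact hx
  linarith [h1 ▸ h2]
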